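/- Let G be a graph product of cyclic groups G(Γ, 𝔭) satisfying: (a) there is a countable A ⊆ Γ such that for every a ∈ Γ and every b ∈ Γ − A with a ≠ b, a is adjacent to b; (b) only finitely many colours have uncountably many vertices; (c) only countably many vertices have colour ∞; (d) every colour class that is uncountable has size continuum. Then G is isomorphic to H ⊕ ⊕_{i<k} (ℤ_{p_i^{n_i}})^{(2^{ℵ₀})} for some countable group H and finitely many prime powers p_i^{n_i}, where each second summand is a direct sum of continuum many copies of ℤ_{p_i^{n_i}}. -/

import Mathlib

def graphProdRels {V : Type} (Γ : SimpleGraph V) (𝔭 : V → ℕ) : Set (FreeGroup V) :=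
  {w | (∃ v, 𝔭 v ≠ 0 ∧ w = FreeGroup.of v ^ 𝔭 v) ∨
       (∃ a b, Γ.Adj a b ∧
         w = FreeGroup.of a * FreeGroup.of b * (FreeGroup.of a)⁻¹ * (FreeGroup.of b)⁻¹)}

def GraphProduct {V : Type} (Γ : SimpleGraph V) (𝔭 : V → ℕ) : Type :=
  PresentedGroup (graphProdRels Γ 𝔭)

instance {V : Type} (Γ : SimpleGraph V) (𝔭 : V → ℕ) : Group (GraphProduct Γ 𝔭) := by
  unfold GraphProduct; infer_instance

def GraphProduct.of {V : Type} {Γ : SimpleGraph V} {𝔭 : V → ℕ} (v : V) : GraphProduct Γ 𝔭 :=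
  PresentedGroup.of v

/-- The support of an element of a graph product: the smallest set of vertices `A` such that
`g` lies in the subgroup generated by the generators from `A`. -/
def GraphProduct.sp {V : Type} {Γ : SimpleGraph V} {𝔭 : V → ℕ} (g : GraphProduct Γ 𝔭) : Set V :=
  {v | ∀ A : Set V, g ∈ Subgroup.closure (GraphProduct.of '' A) → v ∈ A}

namespace GraphProduct

variable {V : Type} {Γ : SimpleGraph V} {𝔭 : V → ℕ}

lemma rel_eq_one {r : FreeGroup V} (h : r ∈ graphProdRels Γ 𝔭) :
    (PresentedGroup.mk _ r : GraphProduct Γ 𝔭) = 1 := by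
  have : r ∈ Subgroup.normalClosure (graphProdRels Γ 𝔭) := Subgroup.subset_normalClosure h
  exact (QuotientGroup.eq_one_iff r).2 this

lemma of_pow_eq_one (v : V) (hv : 𝔭 v ≠ 0) : (of v : GraphProduct Γ 𝔭) ^ 𝔭 v = 1 := by
  have := rel_eq_one (Γ := Γ) (𝔭 := 𝔭) (Or.inl ⟨v, hv, rfl⟩)
  rw [map_pow] at this
  exact this

lemma commute_of {a b : V} (h : Γ.Adj a b) :
    Commute (of a : GraphProduct Γ 𝔭) (of b) := by
  have := rel_eq_one (Γ := Γ) (𝔭 := 𝔭) (Or.inr ⟨a, b, h, rfl⟩)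
  rw [map_mul, map_mul, map_mul, map_inv, map_inv] at this
  have h2 : (of a : GraphProduct Γ 𝔭) * of b * (of a)⁻¹ * (of b)⁻¹ = 1 := this
  have h3 : (of a * of b * (of a)⁻¹ : GraphProduct Γ 𝔭) = of b := by
    have := mul_eq_one_iff_eq_inv.mp h2
    rwa [inv_inv] at this
  show (of a : GraphProduct Γ 𝔭) * of b = of b * of a
  calc (of a : GraphProduct Γ 𝔭) * of b = (of a * of b * (of a)⁻¹) * of a := by group
  _ = of b * of a := by rw [h3]

lemma closure_range_of : Subgroup.closure (Set.range (of : V → GraphProduct Γ 𝔭)) = ⊤ :=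
  PresentedGroup.closure_range_of _

lemma of_mem_center {b : V} (hb : ∀ a : V, a ≠ b → Γ.Adj a b) :
    (of b : GraphProduct Γ 𝔭) ∈ Subgroup.center (GraphProduct Γ 𝔭) := by
  rw [Subgroup.mem_center_iff]
  intro g
  have hg : g ∈ Subgroup.closure (Set.range (of : V → GraphProduct Γ 𝔭)) := by
    rw [closure_range_of]; trivial
  induction hg using Subgroup.closure_induction with
  | mem x hx =>
      obtain ⟨a, rfl⟩ := hx
      by_cases hab : a = b
      · subst hab; rfl
      · exact commute_of (hb a hab)
  | one => simp
  | mul x y _ _ hx hy => rw [mul_assoc, hy, ← mul_assoc, hx, mul_assoc]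
  | inv x _ hx =>
      have := hx
      calc x⁻¹ * of b = x⁻¹ * of b * x * x⁻¹ := by group
      _ = x⁻¹ * (of b * x) * x⁻¹ := by group
      _ = x⁻¹ * (x * of b) * x⁻¹ := by rw [this]
      _ = of b * x⁻¹ := by group

end GraphProduct

open scoped IsMulCommutative

section Iso

open GraphProduct

variable {V : Type}

abbrev HH (Γ : SimpleGraph V) (𝔭 : V → ℕ) (A' : Set V) : Type :=
  GraphProduct (Γ.induce A') (fun v => 𝔭 v.val)

abbrev MM {k : ℕ} (n : Fin k → ℕ) : Type := ∀ i : Fin k, (Set ℕ →₀ ZMod (n i))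

abbrev TT (Γ : SimpleGraph V) (𝔭 : V → ℕ) (A' : Set V) {k : ℕ} (n : Fin k → ℕ) : Type :=
  HH Γ 𝔭 A' × Multiplicative (MM n)

lemma prod_commute {α β : Type*} [Monoid α] [Monoid β] {x y : α × β}
    (h1 : Commute x.1 y.1) (h2 : Commute x.2 y.2) : Commute x y :=
  Prod.ext h1 h2

open Classical in
/-- images of the generators in the product group -/
noncomputable def fV (Γ : SimpleGraph V) (𝔭 : V → ℕ) (A' : Set V) {k : ℕ} (n : Fin k → ℕ)
    (g : {v : V // v ∉ A'} ≃ Fin k × Set ℕ) (v : V) : TT Γ 𝔭 A' n :=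
  if h : v ∈ A' then (GraphProduct.of ⟨v, h⟩, 1)
  else (1, Multiplicative.ofAdd
    (Pi.single (g ⟨v, h⟩).1 (Finsupp.single (g ⟨v, h⟩).2 (1 : ZMod (n (g ⟨v, h⟩).1)))))

variable {Γ : SimpleGraph V} {𝔭 : V → ℕ} {A' : Set V} {k : ℕ} {n : Fin k → ℕ}

lemma fV_rels (g : {v : V // v ∉ A'} ≃ Fin k × Set ℕ)
    (hg : ∀ w : {v : V // v ∉ A'}, 𝔭 w.val = n (g w).1) :
    ∀ r ∈ graphProdRels Γ 𝔭, FreeGroup.lift (fV Γ 𝔭 A' n g) r = 1 := by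
  rintro r (⟨v, hv, rfl⟩ | ⟨a, b, hab, rfl⟩)
  · rw [map_pow, FreeGroup.lift_apply_of]
    unfold fV
    by_cases h : v ∈ A'
    · rw [dif_pos h]
      have : (GraphProduct.of ⟨v, h⟩ : HH Γ 𝔭 A') ^ 𝔭 v = 1 :=
        of_pow_eq_one (Γ := Γ.induce A') (𝔭 := fun v => 𝔭 v.val) ⟨v, h⟩ hv
      rw [Prod.pow_mk, this, one_pow]
      rfl
    · rw [dif_neg h]
      have hp : 𝔭 v = n (g ⟨v, h⟩).1 := hg ⟨v, h⟩
      rw [Prod.pow_mk, one_pow]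
      refine Prod.ext rfl ?_
      show (Multiplicative.ofAdd _) ^ 𝔭 v = 1
      rw [← ofAdd_nsmul, ← Pi.single_smul, Finsupp.smul_single, hp]
      norm_num [nsmul_eq_mul, ZMod.natCast_self]
  · simp only [map_mul, map_inv, FreeGroup.lift_apply_of]
    refine commutatorElement_eq_one_iff_commute.mpr ?_
    unfold fV
    by_cases hA : a ∈ A' <;> by_cases hB : b ∈ A'
    · rw [dif_pos hA, dif_pos hB]
      refine prod_commute ?_ (Commute.one_left _)
      exact commute_of (by simpa using hab)
    · rw [dif_pos hA, dif_neg hB]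
      exact prod_commute (Commute.one_right _) (Commute.one_left _)
    · rw [dif_neg hA, dif_pos hB]
      exact prod_commute (Commute.one_left _) (Commute.one_right _)
    · rw [dif_neg hA, dif_neg hB]
      exact prod_commute (Commute.one_left _) (mul_comm _ _)

noncomputable def phi (g : {v : V // v ∉ A'} ≃ Fin k × Set ℕ)
    (hg : ∀ w : {v : V // v ∉ A'}, 𝔭 w.val = n (g w).1) :
    GraphProduct Γ 𝔭 →* TT Γ 𝔭 A' n :=
  PresentedGroup.toGroup (fV_rels g hg)

lemma phi_of (g : {v : V // v ∉ A'} ≃ Fin k × Set ℕ)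
    (hg : ∀ w : {v : V // v ∉ A'}, 𝔭 w.val = n (g w).1) (v : V) :
    phi g hg (of v) = fV Γ 𝔭 A' n g v :=
  PresentedGroup.toGroup.of _

lemma psiH_rels : ∀ r ∈ graphProdRels (Γ.induce A') (fun v => 𝔭 v.val),
    FreeGroup.lift (fun a : ↥A' => (GraphProduct.of a.val : GraphProduct Γ 𝔭)) r = 1 := by
  rintro r (⟨v, hv, rfl⟩ | ⟨a, b, hab, rfl⟩)
  · rw [map_pow, FreeGroup.lift_apply_of]
    exact of_pow_eq_one v.val hv
  · simp only [map_mul, map_inv, FreeGroup.lift_apply_of]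
    exact commutatorElement_eq_one_iff_commute.mpr (commute_of (by simpa using hab))

noncomputable def psiH (Γ : SimpleGraph V) (𝔭 : V → ℕ) (A' : Set V) :
    HH Γ 𝔭 A' →* GraphProduct Γ 𝔭 :=
  PresentedGroup.toGroup psiH_rels

lemma psiH_of (a : ↥A') : psiH Γ 𝔭 A' (of a) = (of a.val : GraphProduct Γ 𝔭) :=
  PresentedGroup.toGroup.of _

lemma of_mem_center' (hadj : ∀ a b : V, b ∉ A' → a ≠ b → Γ.Adj a b)
    (w : {v : V // v ∉ A'}) :
    (of w.val : GraphProduct Γ 𝔭) ∈ Subgroup.center (GraphProduct Γ 𝔭) :=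
  of_mem_center fun a hne => hadj a w.val w.prop hne

noncomputable def centElt (hadj : ∀ a b : V, b ∉ A' → a ≠ b → Γ.Adj a b)
    (w : {v : V // v ∉ A'}) : ↥(Subgroup.center (GraphProduct Γ 𝔭)) :=
  ⟨of w.val, of_mem_center' hadj w⟩

noncomputable def zeta (g : {v : V // v ∉ A'} ≃ Fin k × Set ℕ)
    (hadj : ∀ a b : V, b ∉ A' → a ≠ b → Γ.Adj a b)
    (hg : ∀ w : {v : V // v ∉ A'}, 𝔭 w.val = n (g w).1)
    (hn1 : ∀ i, 1 < n i) (i : Fin k) (x : Set ℕ) :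
    ZMod (n i) →+ Additive ↥(Subgroup.center (GraphProduct Γ 𝔭)) :=
  ZMod.lift (n i)
    ⟨zmultiplesHom _ (Additive.ofMul (centElt hadj (g.symm (i, x)))),
      by
        have hp : 𝔭 (g.symm (i, x)).val = n i := by
          have := hg (g.symm (i, x)); rwa [Equiv.apply_symm_apply] at this
        have h1 : centElt (𝔭 := 𝔭) hadj (g.symm (i, x)) ^ n i = 1 := by
          apply Subtype.ext
          show (of (g.symm (i, x)).val : GraphProduct Γ 𝔭) ^ n i = 1
          rw [← hp]
          exact of_pow_eq_one _ (by rw [hp]; have := hn1 i; omega)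
        rw [zmultiplesHom_apply, ← ofMul_zpow, zpow_natCast, h1, ofMul_one]⟩

noncomputable def psiMadd (g : {v : V // v ∉ A'} ≃ Fin k × Set ℕ)
    (hadj : ∀ a b : V, b ∉ A' → a ≠ b → Γ.Adj a b)
    (hg : ∀ w : {v : V // v ∉ A'}, 𝔭 w.val = n (g w).1)
    (hn1 : ∀ i, 1 < n i) :
    MM n →+ Additive ↥(Subgroup.center (GraphProduct Γ 𝔭)) :=
  AddMonoidHom.mk' (fun m => ∑ i, Finsupp.liftAddHom (zeta g hadj hg hn1 i) (m i))
    (by intro a b; simp [Finset.sum_add_distrib])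

noncomputable def psiM (g : {v : V // v ∉ A'} ≃ Fin k × Set ℕ)
    (hadj : ∀ a b : V, b ∉ A' → a ≠ b → Γ.Adj a b)
    (hg : ∀ w : {v : V // v ∉ A'}, 𝔭 w.val = n (g w).1)
    (hn1 : ∀ i, 1 < n i) :
    Multiplicative (MM n) →* GraphProduct Γ 𝔭 :=
  (Subgroup.center (GraphProduct Γ 𝔭)).subtype.comp
    (AddMonoidHom.toMultiplicativeLeft (psiMadd g hadj hg hn1))

lemma psiM_mem_center (g : {v : V // v ∉ A'} ≃ Fin k × Set ℕ)
    (hadj : ∀ a b : V, b ∉ A' → a ≠ b → Γ.Adj a b)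
    (hg : ∀ w : {v : V // v ∉ A'}, 𝔭 w.val = n (g w).1)
    (hn1 : ∀ i, 1 < n i) (x : Multiplicative (MM n)) :
    psiM g hadj hg hn1 x ∈ Subgroup.center (GraphProduct Γ 𝔭) :=
  ((AddMonoidHom.toMultiplicativeLeft (psiMadd g hadj hg hn1)) x).prop

noncomputable def psi (g : {v : V // v ∉ A'} ≃ Fin k × Set ℕ)
    (hadj : ∀ a b : V, b ∉ A' → a ≠ b → Γ.Adj a b)
    (hg : ∀ w : {v : V // v ∉ A'}, 𝔭 w.val = n (g w).1)
    (hn1 : ∀ i, 1 < n i) :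
    TT Γ 𝔭 A' n →* GraphProduct Γ 𝔭 :=
  MonoidHom.noncommCoprod (psiH Γ 𝔭 A') (psiM g hadj hg hn1)
    (fun p x => Subgroup.mem_center_iff.mp (psiM_mem_center g hadj hg hn1 x) _)

end Iso

section Iso2

open GraphProduct

variable {V : Type} {Γ : SimpleGraph V} {𝔭 : V → ℕ} {A' : Set V} {k : ℕ} {n : Fin k → ℕ}
variable (g : {v : V // v ∉ A'} ≃ Fin k × Set ℕ)
variable (hadj : ∀ a b : V, b ∉ A' → a ≠ b → Γ.Adj a b)
variable (hg : ∀ w : {v : V // v ∉ A'}, 𝔭 w.val = n (g w).1)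
variable (hn1 : ∀ i, 1 < n i)

lemma psiMadd_apply (m : MM n) : psiMadd g hadj hg hn1 m
    = ∑ i, Finsupp.liftAddHom (zeta g hadj hg hn1 i) (m i) := rfl

lemma psiM_apply (x : Multiplicative (MM n)) : psiM g hadj hg hn1 x
    = ((Additive.toMul (psiMadd g hadj hg hn1 (Multiplicative.toAdd x))
        : ↥(Subgroup.center (GraphProduct Γ 𝔭))) : GraphProduct Γ 𝔭) := rfl

lemma psi_apply (p : HH Γ 𝔭 A') (x : Multiplicative (MM n)) :
    psi g hadj hg hn1 (p, x) = psiH Γ 𝔭 A' p * psiM g hadj hg hn1 x := rfl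

lemma psiM_single (i : Fin k) (x : Set ℕ) (c : ZMod (n i)) :
    psiM g hadj hg hn1 (Multiplicative.ofAdd (Pi.single i (Finsupp.single x c))) =
      (of (g.symm (i, x)).val : GraphProduct Γ 𝔭) ^ c.val := by
  haveI : NeZero (n i) := ⟨by have := hn1 i; omega⟩
  have h1 : psiMadd g hadj hg hn1 (Pi.single i (Finsupp.single x c))
      = (c.val : ℤ) • Additive.ofMul (centElt hadj (g.symm (i, x))) := by
    rw [psiMadd_apply, Fintype.sum_eq_single i (fun j hj => by rw [Pi.single_eq_of_ne hj, map_zero])]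
    rw [Pi.single_eq_same, Finsupp.liftAddHom_apply_single]
    have hc : ((c.val : ℤ) : ZMod (n i)) = c := by
      rw [Int.cast_natCast]; exact ZMod.natCast_rightInverse c
    show ZMod.lift (n i) _ c = _
    conv_lhs => rw [← hc]
    rw [ZMod.lift_coe, zmultiplesHom_apply]
  rw [psiM_apply, toAdd_ofAdd, h1]
  simp only [toMul_zsmul, toMul_ofMul, zpow_natCast, SubgroupClass.coe_pow]
  rfl

lemma psi_phi (x : GraphProduct Γ 𝔭) : psi g hadj hg hn1 (phi g hg x) = x := by
  have hx : x ∈ Subgroup.closure (Set.range (of : V → GraphProduct Γ 𝔭)) := by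
    rw [GraphProduct.closure_range_of]; trivial
  induction hx using Subgroup.closure_induction with
  | mem y hy =>
      obtain ⟨v, rfl⟩ := hy
      rw [phi_of]
      unfold fV
      by_cases h : v ∈ A'
      · rw [dif_pos h, psi_apply, psiH_of, map_one, mul_one]
      · rw [dif_neg h, psi_apply, map_one, one_mul, psiM_single g hadj hg hn1]
        haveI : Fact (1 < n ((g ⟨v, h⟩).1)) := ⟨hn1 _⟩
        rw [ZMod.val_one, pow_one]
        exact congrArg _ (congrArg Subtype.val (Equiv.symm_apply_apply g ⟨v, h⟩))
  | one => simp
  | mul a b _ _ iha ihb => rw [map_mul, map_mul, iha, ihb]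
  | inv a _ iha => rw [map_inv, map_inv, iha]

lemma phi_psi_H (p : HH Γ 𝔭 A') :
    phi g hg (psi g hadj hg hn1 (p, 1)) = (p, 1) := by
  have hx : p ∈ Subgroup.closure (Set.range (of : ↥A' → HH Γ 𝔭 A')) := by
    rw [GraphProduct.closure_range_of]; trivial
  induction hx using Subgroup.closure_induction with
  | mem y hy =>
      obtain ⟨a, rfl⟩ := hy
      rw [psi_apply, psiH_of, map_one, mul_one, phi_of]
      unfold fV
      rw [dif_pos a.prop]
  | one => rw [Prod.mk_one_one, map_one, map_one]
  | mul a b _ _ iha ihb =>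
      have : ((a * b : HH Γ 𝔭 A'), (1 : Multiplicative (MM n)))
          = (a, 1) * (b, 1) := by rw [Prod.mk_mul_mk, mul_one]
      rw [this, map_mul, map_mul, iha, ihb]
  | inv a _ iha =>
      have : ((a⁻¹ : HH Γ 𝔭 A'), (1 : Multiplicative (MM n)))
          = (a, (1 : Multiplicative (MM n)))⁻¹ := by rw [Prod.inv_mk, inv_one]
      rw [this, map_inv, map_inv, iha]

lemma phi_psi_M (m : MM n) :
    phi g hg (psi g hadj hg hn1 (1, Multiplicative.ofAdd m))
      = (1, Multiplicative.ofAdd m) := by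
  classical
  let S : AddSubmonoid (MM n) :=
    { carrier := {m | phi g hg (psi g hadj hg hn1 (1, Multiplicative.ofAdd m))
        = (1, Multiplicative.ofAdd m)}
      zero_mem' := by
        show phi g hg (psi g hadj hg hn1 (1, Multiplicative.ofAdd 0)) = _
        rw [ofAdd_zero]
        show phi g hg (psi g hadj hg hn1 1) = 1
        rw [map_one, map_one]
      add_mem' := by
        intro a b ha hb
        show phi g hg (psi g hadj hg hn1 (1, Multiplicative.ofAdd (a + b))) = _
        have : ((1 : HH Γ 𝔭 A'), Multiplicative.ofAdd (a + b))
            = (1, Multiplicative.ofAdd a) * (1, Multiplicative.ofAdd b) := by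
          rw [Prod.mk_mul_mk, mul_one, ofAdd_add]
        rw [this, map_mul, map_mul, ha, hb] }
  have hsingle : ∀ (i : Fin k) (x : Set ℕ) (c : ZMod (n i)),
      Pi.single i (Finsupp.single x c) ∈ S := by
    intro i x c
    haveI : NeZero (n i) := ⟨by have := hn1 i; omega⟩
    show phi g hg (psi g hadj hg hn1 (1, _)) = _
    rw [psi_apply, map_one, one_mul, psiM_single g hadj hg hn1, map_pow, phi_of]
    unfold fV
    rw [dif_neg (g.symm (i, x)).prop]
    have hgs : g ⟨(g.symm (i, x)).val, (g.symm (i, x)).prop⟩ = (i, x) :=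
      Equiv.apply_symm_apply g (i, x)
    rw [hgs, Prod.pow_mk, one_pow, ← ofAdd_nsmul, ← Pi.single_smul, Finsupp.smul_single]
    have : c.val • (1 : ZMod (n i)) = c := by
      rw [nsmul_eq_mul, mul_one]; exact ZMod.natCast_rightInverse c
    rw [this]
  have hmem : m ∈ S := by
    have hm : m = ∑ i, Pi.single i (m i) := (Finset.univ_sum_single m).symm
    rw [hm]
    refine AddSubmonoid.sum_mem S (fun i _ => ?_)
    induction (m i) using Finsupp.induction with
    | zero => rw [Pi.single_zero]; exact S.zero_mem
    | single_add x c f _ _ hf =>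
        rw [Pi.single_add]
        exact S.add_mem (hsingle i x c) hf
  exact hmem

end Iso2

section Iso3

open GraphProduct

variable {V : Type} {Γ : SimpleGraph V} {𝔭 : V → ℕ} {A' : Set V} {k : ℕ} {n : Fin k → ℕ}
variable (g : {v : V // v ∉ A'} ≃ Fin k × Set ℕ)
variable (hadj : ∀ a b : V, b ∉ A' → a ≠ b → Γ.Adj a b)
variable (hg : ∀ w : {v : V // v ∉ A'}, 𝔭 w.val = n (g w).1)
variable (hn1 : ∀ i, 1 < n i)

noncomputable def theIso : GraphProduct Γ 𝔭 ≃* TT Γ 𝔭 A' n :=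
  MonoidHom.toMulEquiv (phi g hg) (psi g hadj hg hn1)
    (MonoidHom.ext fun x => psi_phi g hadj hg hn1 x)
    (MonoidHom.ext fun t => by
      obtain ⟨p, x⟩ := t
      have h2 : ((p, x) : TT Γ 𝔭 A' n) = (p, 1) * (1, x) := by
        rw [Prod.mk_mul_mk, mul_one, one_mul]
      show phi g hg (psi g hadj hg hn1 (p, x)) = (p, x)
      have h3 := phi_psi_M g hadj hg hn1 (Multiplicative.toAdd x)
      rw [ofAdd_toAdd] at h3
      rw [h2, map_mul, map_mul, phi_psi_H g hadj hg hn1 p, h3])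

lemma countable_graphProduct {W : Type} [Countable W] (Γ' : SimpleGraph W) (q : W → ℕ) :
    Countable (GraphProduct Γ' q) := by
  classical
  haveI : Countable (FreeGroup W) := FreeGroup.toWord_injective.countable
  exact (PresentedGroup.mk_surjective _).countable

end Iso3

theorem stmt_10 {V : Type} (Γ : SimpleGraph V) (𝔭 : V → ℕ)
    (h𝔭 : ∀ v, 𝔭 v = 0 ∨ IsPrimePow (𝔭 v))
    (ha : ∃ A : Set V, A.Countable ∧ ∀ a b : V, b ∉ A → a ≠ b → Γ.Adj a b)
    (hb : {c : ℕ | ¬ (𝔭 ⁻¹' {c}).Countable}.Finite)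
    (hc : (𝔭 ⁻¹' {0}).Countable)
    (hd : ∀ c : ℕ, ¬ (𝔭 ⁻¹' {c}).Countable →
      Cardinal.mk (𝔭 ⁻¹' {c}) = Cardinal.continuum) :
    ∃ (k : ℕ) (q m : Fin k → ℕ), (∀ i, (q i).Prime ∧ 1 ≤ m i) ∧
      ∃ (H : Type) (_ : Group H), Countable H ∧
        Nonempty (GraphProduct Γ 𝔭 ≃*
          H × Multiplicative (Π i : Fin k, (Set ℕ →₀ ZMod (q i ^ m i)))) := by
  classical
  obtain ⟨A, hAc, hAadj⟩ := ha
  haveI : Finite ↥{c : ℕ | ¬ (𝔭 ⁻¹' {c}).Countable} := hb.to_subtype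
  obtain ⟨k, ⟨e⟩⟩ := Finite.exists_equiv_fin ↥{c : ℕ | ¬ (𝔭 ⁻¹' {c}).Countable}
  set cfun : Fin k → ℕ := fun i => ((e.symm i : ↥{c : ℕ | ¬ (𝔭 ⁻¹' {c}).Countable}) : ℕ)
    with hcfun
  have hcC : ∀ i, ¬ (𝔭 ⁻¹' {cfun i}).Countable := fun i => (e.symm i).prop
  have hpp : ∀ i, IsPrimePow (cfun i) := by
    intro i
    have hne : (𝔭 ⁻¹' {cfun i}).Nonempty := by
      rw [Set.nonempty_iff_ne_empty]
      intro h
      exact hcC i (by rw [h]; exact Set.countable_empty)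
    obtain ⟨v, hv⟩ := hne
    have hv' : 𝔭 v = cfun i := hv
    rcases h𝔭 v with h0 | hppv
    · exact absurd (by rw [← hv', h0]; exact hc) (hcC i)
    · rwa [hv'] at hppv
  choose q m hq hm hqm using hpp
  refine ⟨k, q, m, fun i => ⟨Nat.prime_iff.mpr (hq i), hm i⟩, ?_⟩
  -- the countable part of the vertex set
  set A' : Set V := A ∪ {v | (𝔭 ⁻¹' {𝔭 v}).Countable} with hA'
  have hA'c : A'.Countable := by
    refine hAc.union ?_
    have heq : {v | (𝔭 ⁻¹' {𝔭 v}).Countable}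
        = ⋃ c ∈ {c : ℕ | (𝔭 ⁻¹' {c}).Countable}, 𝔭 ⁻¹' {c} := by
      ext v
      simp only [Set.mem_setOf_eq, Set.mem_iUnion, Set.mem_preimage, Set.mem_singleton_iff]
      exact ⟨fun h => ⟨𝔭 v, h, rfl⟩, fun ⟨c, hc', hvc⟩ => by rw [hvc]; exact hc'⟩
    rw [heq]
    exact Set.Countable.biUnion (Set.to_countable _) (fun c hc' => hc')
  set n : Fin k → ℕ := fun i => q i ^ m i with hn
  have hn1 : ∀ i, 1 < n i := fun i =>
    Nat.one_lt_pow (by have := hm i; omega) (Nat.prime_iff.mpr (hq i)).two_le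
  have hncfun : ∀ i, n i = cfun i := hqm
  have hadj' : ∀ a b : V, b ∉ A' → a ≠ b → Γ.Adj a b := fun a b hb' hne =>
    hAadj a b (fun h => hb' (Or.inl h)) hne
  have hBmem : ∀ v : V, v ∉ A' → ¬ (𝔭 ⁻¹' {𝔭 v}).Countable := fun v hv h => hv (Or.inr h)
  let idx : {v : V // v ∉ A'} → Fin k := fun w => e ⟨𝔭 w.val, hBmem w.val w.prop⟩
  have hidx : ∀ w, 𝔭 w.val = cfun (idx w) := fun w => by
    show 𝔭 w.val = ((e.symm (e ⟨𝔭 w.val, hBmem w.val w.prop⟩)) : ℕ)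
    rw [Equiv.symm_apply_apply]
  -- each fiber of idx has cardinality continuum
  have hfib : ∀ i : Fin k,
      Cardinal.mk {w : {v : V // v ∉ A'} // idx w = i} = Cardinal.continuum := by
    intro i
    have hidxiff : ∀ w : {v : V // v ∉ A'}, idx w = i ↔ 𝔭 w.val = cfun i := by
      intro w
      constructor
      · intro h; rw [hidx w, h]
      · intro h
        have : (⟨𝔭 w.val, hBmem w.val w.prop⟩ : ↥{c : ℕ | ¬ (𝔭 ⁻¹' {c}).Countable})
            = e.symm i := Subtype.ext h
        show e _ = i
        rw [this, Equiv.apply_symm_apply]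
    let E : {w : {v : V // v ∉ A'} // idx w = i} ≃ ↥(𝔭 ⁻¹' {cfun i} \ A') :=
      { toFun := fun w => ⟨w.val.val, (hidxiff w.val).mp w.prop, w.val.prop⟩
        invFun := fun v => ⟨⟨v.val, v.prop.2⟩, (hidxiff ⟨v.val, v.prop.2⟩).mpr v.prop.1⟩
        left_inv := fun w => rfl
        right_inv := fun v => rfl }
    rw [Cardinal.mk_congr E]
    -- now cardinal arithmetic
    have hs : Cardinal.mk (𝔭 ⁻¹' {cfun i}) = Cardinal.continuum := hd _ (hcC i)
    have key := Cardinal.mk_diff_add_mk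
      (Set.inter_subset_left : 𝔭 ⁻¹' {cfun i} ∩ A' ⊆ 𝔭 ⁻¹' {cfun i})
    rw [Set.diff_self_inter, hs] at key
    have hTle : Cardinal.mk ↥(𝔭 ⁻¹' {cfun i} ∩ A') ≤ Cardinal.aleph0 :=
      (hA'c.mono Set.inter_subset_right).le_aleph0
    have ha0 : Cardinal.aleph0 ≤ Cardinal.mk ↥(𝔭 ⁻¹' {cfun i} \ A') := by
      by_contra hlt
      push_neg at hlt
      have : Cardinal.continuum ≤ Cardinal.aleph0 := by
        rw [← key]
        calc Cardinal.mk ↥(𝔭 ⁻¹' {cfun i} \ A') + Cardinal.mk ↥(𝔭 ⁻¹' {cfun i} ∩ A')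
            ≤ Cardinal.aleph0 + Cardinal.aleph0 := add_le_add hlt.le hTle
        _ = Cardinal.aleph0 := by simp
      exact absurd this (not_le.mpr Cardinal.aleph0_lt_continuum)
    rw [← key, Cardinal.add_eq_left ha0 (hTle.trans ha0)]
  have hSetN : Cardinal.mk (Set ℕ) = Cardinal.continuum := by
    rw [Cardinal.mk_set, Cardinal.mk_nat, Cardinal.two_power_aleph0]
  have fibE : ∀ i : Fin k, Nonempty ({w : {v : V // v ∉ A'} // idx w = i} ≃ Set ℕ) :=
    fun i => Cardinal.eq.mp (by rw [hfib i, hSetN])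
  let fib : ∀ i, {w : {v : V // v ∉ A'} // idx w = i} ≃ Set ℕ := fun i => (fibE i).some
  let g : {v : V // v ∉ A'} ≃ Fin k × Set ℕ :=
    (Equiv.sigmaFiberEquiv idx).symm.trans
      ((Equiv.sigmaCongrRight fib).trans (Equiv.sigmaEquivProd (Fin k) (Set ℕ)))
  have hg : ∀ w : {v : V // v ∉ A'}, 𝔭 w.val = n (g w).1 := fun w => by
    have h1 : (g w).1 = idx w := rfl
    rw [h1, hncfun]
    exact hidx w
  haveI : Countable ↥A' := hA'c.to_subtype
  exact ⟨HH Γ 𝔭 A', inferInstance, countable_graphProduct _ _,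
    ⟨theIso g hadj' hg hn1⟩⟩
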